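/- Let σ and τ be open simplices in ℝ^m with vertex sets V(σ) and V(τ), such that every face of σ and of τ is either disjoint from or equal to every face of the other. If x ∈ closure(σ) ∩ closure(τ), then x lies in the open face of σ spanned by V(σ) ∩ V(τ); in particular closure(σ) ∩ closure(τ) ⊆ conv(V(σ) ∩ V(τ)). -/

import Mathlib

/-!
A point of the closed simplex on `V` lies in the open face spanned by the vertices that carry
positive barycentric weight. So a point of both closures lies in an open face of `σ` and in an
open face of `τ`; these meet, hence coincide, and their common vertex set lies in `S ∩ T`.
-/

/-- The open simplex spanned by a finite set `V` of points: strictly positive barycentric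
combinations of the elements of `V`. -/
def openSimplexOf {m : ℕ} (V : Finset (Fin m → ℝ)) : Set (Fin m → ℝ) :=
  {x | ∃ w : (Fin m → ℝ) → ℝ, (∀ v ∈ V, 0 < w v) ∧
    ∑ v ∈ V, w v = 1 ∧ ∑ v ∈ V, w v • v = x}

section OpenSimplex

variable {m : ℕ}

lemma openSimplexOf_subset_convexHull (V : Finset (Fin m → ℝ)) :
    openSimplexOf V ⊆ convexHull ℝ (V : Set (Fin m → ℝ)) := by
  rintro x ⟨w, hw_pos, hw_sum, rfl⟩
  rw [Finset.convexHull_eq]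
  exact ⟨w, fun v hv => (hw_pos v hv).le, hw_sum, by
    rw [Finset.centerMass_eq_of_sum_1 _ _ hw_sum]; rfl⟩

lemma closure_openSimplexOf_subset_convexHull (V : Finset (Fin m → ℝ)) :
    closure (openSimplexOf V) ⊆ convexHull ℝ (V : Set (Fin m → ℝ)) :=
  closure_minimal (openSimplexOf_subset_convexHull V)
    (V.finite_toSet.isClosed_convexHull (𝕜 := ℝ))

lemma exists_face_mem_openSimplexOf_of_mem_convexHull {V : Finset (Fin m → ℝ)}
    {x : Fin m → ℝ} (hx : x ∈ convexHull ℝ (V : Set (Fin m → ℝ))) :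
    ∃ A ⊆ V, A.Nonempty ∧ x ∈ openSimplexOf A := by
  rw [Finset.convexHull_eq] at hx
  obtain ⟨w, hw_nonneg, hw_sum, hx⟩ := hx
  rw [Finset.centerMass_eq_of_sum_1 _ _ hw_sum] at hx
  have filter_sum {β : Type} [AddCommMonoid β] (f : (Fin m → ℝ) → β)
      (hf : ∀ v, w v = 0 → f v = 0) : ∑ v ∈ V with 0 < w v, f v = ∑ v ∈ V, f v :=
    Finset.sum_filter_of_ne fun v hv hfv =>
      (hw_nonneg v hv).lt_of_ne fun h => hfv (hf v h.symm)
  have hw_sum' : ∑ v ∈ V with 0 < w v, w v = 1 := (filter_sum w fun _ h => h).trans hw_sum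
  refine ⟨V.filter (0 < w ·), Finset.filter_subset _ _,
    Finset.nonempty_of_sum_ne_zero (hw_sum' ▸ one_ne_zero), w,
    fun v hv => (Finset.mem_filter.1 hv).2, hw_sum', ?_⟩
  rw [filter_sum (fun v => w v • v) fun v h => by simp [h]]
  exact hx

lemma exists_face_mem_openSimplexOf_of_mem_closure {V : Finset (Fin m → ℝ)}
    {x : Fin m → ℝ} (hx : x ∈ closure (openSimplexOf V)) :
    ∃ A ⊆ V, A.Nonempty ∧ x ∈ openSimplexOf A :=
  exists_face_mem_openSimplexOf_of_mem_convexHull (closure_openSimplexOf_subset_convexHull V hx)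

end OpenSimplex

theorem stmt_6_general (m : ℕ) (S T : Finset (Fin m → ℝ))
    (hfaces : ∀ A : Finset (Fin m → ℝ), A ⊆ S → A.Nonempty →
      ∀ B : Finset (Fin m → ℝ), B ⊆ T → B.Nonempty →
        openSimplexOf A ∩ openSimplexOf B = ∅ ∨ A = B) :
    (∀ x ∈ closure (openSimplexOf S) ∩ closure (openSimplexOf T),
      ∃ A : Finset (Fin m → ℝ), A ⊆ S ∩ T ∧ A.Nonempty ∧ x ∈ openSimplexOf A) ∧
    closure (openSimplexOf S) ∩ closure (openSimplexOf T)
      ⊆ convexHull ℝ ((S ∩ T : Finset (Fin m → ℝ)) : Set (Fin m → ℝ)) := by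
  have common_face : ∀ x ∈ closure (openSimplexOf S) ∩ closure (openSimplexOf T),
      ∃ A : Finset (Fin m → ℝ), A ⊆ S ∩ T ∧ A.Nonempty ∧ x ∈ openSimplexOf A := by
    rintro x ⟨hxS, hxT⟩
    obtain ⟨A, hAS, hA, hxA⟩ := exists_face_mem_openSimplexOf_of_mem_closure hxS
    obtain ⟨B, hBT, hB, hxB⟩ := exists_face_mem_openSimplexOf_of_mem_closure hxT
    obtain hdisj | rfl := hfaces A hAS hA B hBT hB
    · exact absurd hdisj (Set.nonempty_iff_ne_empty.1 ⟨x, hxA, hxB⟩)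
    · exact ⟨A, Finset.subset_inter hAS hBT, hA, hxA⟩
  refine ⟨common_face, fun x hx => ?_⟩
  obtain ⟨A, hA, -, hxA⟩ := common_face x hx
  exact convexHull_mono (Finset.coe_subset.2 hA) (openSimplexOf_subset_convexHull A hxA)

/-- let `σ`, `τ` be open simplices with (affinely independent) vertex sets
`S`, `T` such that every (open) face of one is either disjoint from or equal to every face
of the other.  If `x ∈ closure σ ∩ closure τ`, then `x` lies in an open face of `σ`
spanned by vertices common to `S` and `T`; in particular
`closure σ ∩ closure τ ⊆ convexHull ℝ (S ∩ T)`. -/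
theorem stmt_6 (m : ℕ) (S T : Finset (Fin m → ℝ))
    (hS : S.Nonempty) (hT : T.Nonempty)
    (hSindep : AffineIndependent ℝ (fun v : {x // x ∈ S} => (v : Fin m → ℝ)))
    (hTindep : AffineIndependent ℝ (fun v : {x // x ∈ T} => (v : Fin m → ℝ)))
    (hfaces : ∀ A : Finset (Fin m → ℝ), A ⊆ S → A.Nonempty →
      ∀ B : Finset (Fin m → ℝ), B ⊆ T → B.Nonempty →
        openSimplexOf A ∩ openSimplexOf B = ∅ ∨ A = B) :
    (∀ x ∈ closure (openSimplexOf S) ∩ closure (openSimplexOf T),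
      ∃ A : Finset (Fin m → ℝ), A ⊆ S ∩ T ∧ A.Nonempty ∧ x ∈ openSimplexOf A) ∧
    closure (openSimplexOf S) ∩ closure (openSimplexOf T)
      ⊆ convexHull ℝ ((S ∩ T : Finset (Fin m → ℝ)) : Set (Fin m → ℝ)) :=
  stmt_6_general m S T hfaces
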